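/- Let R be a commutative Noetherian ring, let I be an ideal of R, and let M ≥ 1 be an integer. Then there exist an element c ∈ R⁰ and an integer N ≥ 1 such that c I^n ⊆ I^{n+M} for all n ≥ N. -/

import Mathlib

/-- `R⁰`: the set of elements of `R` not contained in any minimal prime. -/
def MemRzero {R : Type*} [CommRing R] (c : R) : Prop := ∀ P ∈ minimalPrimes R, c ∉ P

/-!
The colon ideals `(I^(n+M) : I^n)` increase with `n`, so they stabilise at some `J`. No minimal
prime `P` contains `J`: if `I ⊄ P`, then `t^M ∈ J` for any `t ∈ I \ P`; if `I ⊆ P`, some element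
outside `P` kills a power of `P` (the product of `P` with the intersection `Q` of the other minimal
primes lies in the nilpotent nilradical, and `Q ⊄ P`), so it lies in `J`. Prime avoidance then
gives `c ∈ J` outside every minimal prime.
-/

namespace Ideal

variable {R : Type*} [CommSemiring R]

theorem exists_annihilator_pow_not_le_of_mem_minimalPrimes [IsNoetherianRing R] {P : Ideal R}
    (hP : P ∈ minimalPrimes R) : ∃ k, ¬ (P ^ k).annihilator ≤ P := by
  classical
  have hPp : P.IsPrime := hP.1.1
  have hfin := minimalPrimes.finite_of_isNoetherianRing R
  set Q := (hfin.toFinset.erase P).inf id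
  have hQ : ¬ Q ≤ P := by
    rw [hPp.inf_le']
    rintro ⟨P', hP', hle⟩
    rw [Finset.mem_erase, Set.Finite.mem_toFinset] at hP'
    exact hP'.1 (le_antisymm hle (hP.2 hP'.2.1 hle))
  have hPQ : P ⊓ Q ≤ nilradical R := by
    rw [nilradical, zero_eq_bot, ← sInf_minimalPrimes]
    refine le_sInf fun P' hP' => ?_
    by_cases h : P' = P
    · exact h ▸ inf_le_left
    · exact inf_le_right.trans (Finset.inf_le (f := id) (by simpa [h] using hP'))
  obtain ⟨k, hk⟩ := IsNoetherianRing.isNilpotent_nilradical R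
  have hQk : Q ^ k ≤ (P ^ k).annihilator := by
    rw [Submodule.le_annihilator_iff, smul_eq_mul, ← mul_pow, eq_bot_iff, ← zero_eq_bot, ← hk,
      mul_comm]
    exact pow_right_mono (mul_le_inf.trans hPQ) k
  exact ⟨k, fun h => hQ (hPp.le_of_pow_le (hQk.trans h))⟩

theorem mem_colon_iff_span_singleton_mul_le {I J : Ideal R} {r : R} :
    r ∈ I.colon (J : Set R) ↔ span {r} * J ≤ I :=
  Submodule.mem_colon.trans span_singleton_mul_le_iff.symm

theorem colon_pow_add_monotone (I : Ideal R) (M : ℕ) :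
    Monotone fun n => (I ^ (n + M)).colon ((I ^ n : Ideal R) : Set R) := by
  refine monotone_nat_of_le_succ fun n r hr => ?_
  rw [mem_colon_iff_span_singleton_mul_le] at hr ⊢
  calc span {r} * I ^ (n + 1) = span {r} * I ^ n * I := by rw [pow_succ, mul_assoc]
    _ ≤ I ^ (n + M) * I := mul_mono_left hr
    _ = I ^ (n + 1 + M) := by rw [← pow_succ, Nat.add_right_comm]

theorem exists_colon_pow_add_not_le_of_mem_minimalPrimes [IsNoetherianRing R] (I : Ideal R)
    (M : ℕ) {P : Ideal R} (hP : P ∈ minimalPrimes R) :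
    ∃ n, ¬ (I ^ (n + M)).colon ((I ^ n : Ideal R) : Set R) ≤ P := by
  by_cases hIP : I ≤ P
  · obtain ⟨k, hk⟩ := exists_annihilator_pow_not_le_of_mem_minimalPrimes hP
    refine ⟨k, fun h => hk (le_trans ?_ h)⟩
    rw [← Submodule.bot_colon]
    exact Submodule.colon_mono bot_le (pow_right_mono hIP k)
  · obtain ⟨t, htI, htP⟩ := SetLike.not_le_iff_exists.mp hIP
    refine ⟨0, fun h => htP (hP.1.1.mem_of_pow_mem M (h ?_))⟩
    rw [Submodule.mem_colon]
    intro x _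
    exact mul_mem_right x _ (by simpa using pow_mem_pow htI M)

end Ideal

open Ideal

theorem exists_mem_memRzero_of_forall_not_le {R : Type*} [CommRing R] [IsNoetherianRing R]
    {J : Ideal R} (hJ : ∀ P ∈ minimalPrimes R, ¬ J ≤ P) : ∃ c ∈ J, MemRzero c := by
  have hcover : ¬ (J : Set R) ⊆ ⋃ P ∈ minimalPrimes R, (P : Set R) := by
    rw [subset_union_prime_finite (minimalPrimes.finite_of_isNoetherianRing R) ⊥ ⊥
      fun P hP _ _ => hP.1.1]
    rintro ⟨P, hP, hle⟩
    exact hJ P hP hle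
  obtain ⟨c, hcJ, hc⟩ := Set.not_subset.mp hcover
  exact ⟨c, hcJ, fun P hP hcP => hc (Set.mem_biUnion hP hcP)⟩

theorem exists_mem_Rzero_mul_pow_subset_general {R : Type*} [CommRing R] [IsNoetherianRing R]
    (I : Ideal R) (M : ℕ) :
    ∃ c : R, MemRzero c ∧ ∃ N : ℕ, 1 ≤ N ∧
      ∀ n : ℕ, N ≤ n → ∀ x ∈ I ^ n, c * x ∈ I ^ (n + M) := by
  set J : ℕ →o Ideal R := ⟨_, colon_pow_add_monotone I M⟩
  obtain ⟨N, hN⟩ := monotone_stabilizes_iff_noetherian.mpr inferInstance J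
  have hJ : ∀ P ∈ minimalPrimes R, ¬ J N ≤ P := by
    intro P hP hle
    obtain ⟨n, hn⟩ := exists_colon_pow_add_not_le_of_mem_minimalPrimes I M hP
    have hJn := J.monotone (le_max_left n N)
    rw [← hN _ (le_max_right n N)] at hJn
    exact hn (hJn.trans hle)
  obtain ⟨c, hcJ, hc⟩ := exists_mem_memRzero_of_forall_not_le hJ
  refine ⟨c, hc, N + 1, Nat.le_add_left 1 N, fun n hn x hx => ?_⟩
  rw [hN n (by omega)] at hcJ
  exact Submodule.mem_colon.mp hcJ x hx

/-- Let `R` be a commutative Noetherian ring, `I` an ideal and `M ≥ 1`.  Then there exist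
`c ∈ R⁰` and `N ≥ 1` such that `c I^n ⊆ I^{n+M}` for all `n ≥ N`. -/
theorem exists_mem_Rzero_mul_pow_subset {R : Type*} [CommRing R] [IsNoetherianRing R]
    (I : Ideal R) (M : ℕ) (hM : 1 ≤ M) :
    ∃ c : R, MemRzero c ∧ ∃ N : ℕ, 1 ≤ N ∧
      ∀ n : ℕ, N ≤ n → ∀ x ∈ I ^ n, c * x ∈ I ^ (n + M) :=
  exists_mem_Rzero_mul_pow_subset_general I M
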